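/- Let m and n be integers with 0 ≤ n ≤ m and let q > 0 with q ≠ 1. Then Σ_{C ∈ C_n(S_{m+1})} q^{circ(C)} = G_q[m+1, m−n+1]. -/
import Mathlib


noncomputable section

/-- The `q`-analogue `[k]_q = (1 - q^k)/(1 - q)` of a natural number `k`. -/
def qAnalogue (q : ℝ) (k : ℕ) : ℝ := (1 - q ^ k) / (1 - q)

/-- The Gould `q`-Stirling numbers `G_q[a,b]`, defined by `G_q[0,0] = 1`,
`G_q[a,b] = 0` for `b > a` or (`b = 0` and `a ≥ 1`), and the recursion
`G_q[a+1,b] = G_q[a,b-1] + [b]_q G_q[a,b]`. -/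
def gould (q : ℝ) : ℕ → ℕ → ℝ
  | 0, 0 => 1
  | 0, _ + 1 => 0
  | _ + 1, 0 => 0
  | a + 1, b + 1 => gould q a b + qAnalogue q (b + 1) * gould q a (b + 1)

/-- The staircase Ferrers board `S_{m+1}`: cells `(c, r)` with `c + r ≤ m - 1`
(equivalently `c + r < m`), where `c` indexes columns and `r` indexes rows. -/
def board (m : ℕ) : Finset (ℕ × ℕ) :=
  (Finset.range m ×ˢ Finset.range m).filter (fun p => p.1 + p.2 < m)

/-- `C_n(S_{m+1})`: configurations of `n` non-attacking rooks on the staircase board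
`S_{m+1}`, i.e. `n`-element subsets of the cells with pairwise distinct column
coordinates and pairwise distinct row coordinates. -/
def configs (m n : ℕ) : Finset (Finset (ℕ × ℕ)) :=
  ((board m).powersetCard n).filter
    (fun C => (∀ p ∈ C, ∀ p' ∈ C, p.1 = p'.1 → p = p') ∧
      ∀ p ∈ C, ∀ p' ∈ C, p.2 = p'.2 → p = p')

/-- The statistic `circ(C)` on the board `S_{m+1}`: the number of board cells `(c, r)`
such that `C` contains a rook `(c₀, r)` with `c₀ < c` and `C` contains no rook
`(c, r₀)` with `r₀ > r`. -/
def circ (m : ℕ) (C : Finset (ℕ × ℕ)) : ℕ :=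
  ((board m).filter (fun p =>
    (∃ p₀ ∈ C, p₀.2 = p.2 ∧ p₀.1 < p.1) ∧ ¬∃ p₀ ∈ C, p₀.1 = p.1 ∧ p.2 < p₀.2)).card

-- basic lemmas
lemma mem_board_iff {m : ℕ} {p : ℕ × ℕ} : p ∈ board m ↔ p.1 + p.2 < m := by
  constructor
  · intro h; exact (Finset.mem_filter.mp h).2
  · intro h
    refine Finset.mem_filter.mpr ⟨Finset.mem_product.mpr ⟨?_, ?_⟩, h⟩ <;>
      · rw [Finset.mem_range]; omega

lemma mem_configs_iff {m n : ℕ} {C : Finset (ℕ × ℕ)} :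
    C ∈ configs m n ↔ (∀ p ∈ C, p.1 + p.2 < m) ∧ C.card = n ∧
      (∀ p ∈ C, ∀ p' ∈ C, p.1 = p'.1 → p = p') ∧
      (∀ p ∈ C, ∀ p' ∈ C, p.2 = p'.2 → p = p') := by
  unfold configs
  rw [Finset.mem_filter, Finset.mem_powersetCard]
  constructor
  · rintro ⟨⟨hsub, hcard⟩, h1, h2⟩
    exact ⟨fun p hp => mem_board_iff.mp (hsub hp), hcard, h1, h2⟩
  · rintro ⟨hsub, hcard, h1, h2⟩
    exact ⟨⟨fun p hp => mem_board_iff.mpr (hsub p hp), hcard⟩, h1, h2⟩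

lemma gould_eq_zero_of_lt (q : ℝ) : ∀ a b : ℕ, a < b → gould q a b = 0 := by
  intro a
  induction a with
  | zero =>
    intro b hb
    match b, hb with
    | b + 1, _ => rfl
  | succ a ih =>
    intro b hb
    match b, hb with
    | b + 1, hb =>
      show gould q (a + 1) (b + 1) = 0
      rw [gould, ih b (by omega), ih (b + 1) (by omega)]
      ring

lemma gould_diag (q : ℝ) : ∀ a : ℕ, gould q a a = 1 := by
  intro a
  induction a with
  | zero => rfl
  | succ a ih =>
    show gould q (a + 1) (a + 1) = 1
    rw [gould, ih, gould_eq_zero_of_lt q a (a + 1) (by omega)]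
    ring

lemma qAnalogue_eq_sum (q : ℝ) (hq1 : q ≠ 1) (k : ℕ) :
    qAnalogue q k = ∑ i ∈ Finset.range k, q ^ i := by
  have h1 : q - 1 ≠ 0 := sub_ne_zero.mpr hq1
  have h2 : (1 : ℝ) - q ≠ 0 := by intro h; apply h1; linarith [h]
  rw [geom_sum_eq hq1, qAnalogue]
  field_simp
  ring

lemma sum_pow_card_filter_lt (q : ℝ) (n : ℕ) : ∀ F : Finset ℕ, F.card = n →
    ∑ r ∈ F, q ^ (F.filter (fun r' => r < r')).card = ∑ i ∈ Finset.range n, q ^ i := by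
  induction n with
  | zero =>
    intro F hF
    rw [Finset.card_eq_zero.mp hF]; simp
  | succ n ih =>
    intro F hF
    have hne : F.Nonempty := by rw [← Finset.card_pos, hF]; omega
    set x := F.min' hne with hx
    have hxF : x ∈ F := F.min'_mem hne
    have h1 : F.filter (fun r' => x < r') = F.erase x := by
      ext y
      rw [Finset.mem_filter, Finset.mem_erase]
      constructor
      · rintro ⟨hy, hlt⟩; exact ⟨by omega, hy⟩
      · rintro ⟨hne', hy⟩
        exact ⟨hy, lt_of_le_of_ne (F.min'_le y hy) (Ne.symm hne')⟩
    rw [← Finset.add_sum_erase _ _ hxF]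
    have h2 : ∀ r ∈ F.erase x, (F.filter (fun r' => r < r')).card
        = ((F.erase x).filter (fun r' => r < r')).card := by
      intro r hr
      have hxr : x ≤ r := F.min'_le r (Finset.mem_of_mem_erase hr)
      rw [Finset.filter_erase, Finset.erase_eq_of_notMem]
      intro hmem
      have := (Finset.mem_filter.mp hmem).2
      omega
    rw [Finset.sum_congr rfl (fun r hr => by rw [h2 r hr])]
    rw [ih (F.erase x) (by rw [Finset.card_erase_of_mem hxF, hF]; rfl)]
    rw [h1, Finset.card_erase_of_mem hxF, hF]
    rw [Finset.sum_range_succ]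
    norm_num [add_comm]
def shiftP (p : ℕ × ℕ) : ℕ × ℕ := (p.1 + 1, p.2)

def shiftC (C : Finset (ℕ × ℕ)) : Finset (ℕ × ℕ) := C.image shiftP

def circset (m : ℕ) (C : Finset (ℕ × ℕ)) : Finset (ℕ × ℕ) :=
  (board m).filter (fun p =>
    (∃ p₀ ∈ C, p₀.2 = p.2 ∧ p₀.1 < p.1) ∧ ¬∃ p₀ ∈ C, p₀.1 = p.1 ∧ p.2 < p₀.2)

lemma circ_eq_card (m : ℕ) (C : Finset (ℕ × ℕ)) : circ m C = (circset m C).card := rfl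

lemma shiftP_injective : Function.Injective shiftP := by
  rintro ⟨a, b⟩ ⟨c, d⟩ h
  simp only [shiftP, Prod.mk.injEq] at h ⊢
  omega

lemma mem_circset_iff {m : ℕ} {C : Finset (ℕ × ℕ)} {p : ℕ × ℕ} :
    p ∈ circset m C ↔ p.1 + p.2 < m ∧
      (∃ p₀ ∈ C, p₀.2 = p.2 ∧ p₀.1 < p.1) ∧ ¬∃ p₀ ∈ C, p₀.1 = p.1 ∧ p.2 < p₀.2 := by
  rw [circset, Finset.mem_filter, mem_board_iff]

lemma circset_shift (m : ℕ) (C : Finset (ℕ × ℕ)) :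
    circset (m + 1) (shiftC C) = (circset m C).image shiftP := by
  ext ⟨c, s⟩
  rw [Finset.mem_image]
  constructor
  · intro hp
    obtain ⟨hb, ⟨p₀, hp₀, hrow, hcol⟩, hno⟩ := mem_circset_iff.mp hp
    obtain ⟨⟨c₁, s₁⟩, hp₁, rfl⟩ := Finset.mem_image.mp hp₀
    simp only [shiftP] at hrow hcol
    have hc1 : 1 ≤ c := by omega
    refine ⟨(c - 1, s), mem_circset_iff.mpr ⟨by simp at hb ⊢; omega,
      ⟨(c₁, s₁), hp₁, hrow, by simp; omega⟩, ?_⟩, by simp [shiftP, Prod.ext_iff]; omega⟩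
    rintro ⟨⟨c₂, s₂⟩, hp₂, hcol2, hrow2⟩
    simp only at hcol2 hrow2
    apply hno
    refine ⟨shiftP (c₂, s₂), Finset.mem_image_of_mem _ hp₂, ?_, ?_⟩ <;>
      simp [shiftP] <;> omega
  · rintro ⟨⟨c', s'⟩, hp', heq⟩
    simp only [shiftP, Prod.mk.injEq] at heq
    obtain ⟨rfl, rfl⟩ := heq
    obtain ⟨hb, ⟨⟨c₀, s₀⟩, hp₀, hrow, hcol⟩, hno⟩ := mem_circset_iff.mp hp'
    simp only at hb hrow hcol
    refine mem_circset_iff.mpr ⟨by simp; omega,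
      ⟨shiftP (c₀, s₀), Finset.mem_image_of_mem _ hp₀, by simp [shiftP]; omega,
        by simp [shiftP]; omega⟩, ?_⟩
    rintro ⟨p₂, hp₂, hcol2, hrow2⟩
    obtain ⟨⟨c₃, s₃⟩, hp₃, rfl⟩ := Finset.mem_image.mp hp₂
    simp only [shiftP] at hcol2 hrow2
    exact hno ⟨(c₃, s₃), hp₃, by simp; omega, by simp; omega⟩

lemma circ_shiftC (m : ℕ) (C : Finset (ℕ × ℕ)) : circ (m + 1) (shiftC C) = circ m C := by
  rw [circ_eq_card, circ_eq_card, circset_shift,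
    Finset.card_image_of_injective _ shiftP_injective]
def freeRows (m : ℕ) (C : Finset (ℕ × ℕ)) : Finset ℕ :=
  (Finset.range (m + 1)).filter (fun r => ∀ p ∈ C, p.2 ≠ r)

lemma mem_freeRows {m : ℕ} {C : Finset (ℕ × ℕ)} {r : ℕ} :
    r ∈ freeRows m C ↔ r < m + 1 ∧ ∀ p ∈ C, p.2 ≠ r := by
  rw [freeRows, Finset.mem_filter, Finset.mem_range]

lemma circ_insert (m r : ℕ) (C : Finset (ℕ × ℕ)) (hfree : ∀ p ∈ C, p.2 ≠ r) :
    circ (m + 1) (insert (0, r) (shiftC C)) =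
      circ m C + ((Finset.range (m - r)).filter
        (fun c => ¬∃ p ∈ C, p.1 = c ∧ r < p.2)).card := by
  have claim1 : (circset (m + 1) (insert (0, r) (shiftC C))).filter (fun p => ¬p.2 = r)
      = (circset m C).image shiftP := by
    ext ⟨c, s⟩
    rw [Finset.mem_filter, Finset.mem_image]
    constructor
    · rintro ⟨hp, hs⟩
      simp only at hs
      obtain ⟨hb, ⟨p₀, hp₀, hrow, hcol⟩, hno⟩ := mem_circset_iff.mp hp
      rcases Finset.mem_insert.mp hp₀ with h0 | h0
      · exfalso; subst h0; exact hs hrow.symm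
      obtain ⟨⟨c₁, s₁⟩, hp₁, rfl⟩ := Finset.mem_image.mp h0
      simp only [shiftP] at hrow hcol
      have hc1 : 1 ≤ c := by omega
      refine ⟨(c - 1, s), mem_circset_iff.mpr ⟨by simp at hb ⊢; omega,
        ⟨(c₁, s₁), hp₁, hrow, by simp; omega⟩, ?_⟩, by simp [shiftP, Prod.ext_iff]; omega⟩
      rintro ⟨⟨c₂, s₂⟩, hp₂, hcol2, hrow2⟩
      simp only at hcol2 hrow2
      apply hno
      refine ⟨shiftP (c₂, s₂), Finset.mem_insert_of_mem (Finset.mem_image_of_mem _ hp₂),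
        ?_, ?_⟩ <;> simp [shiftP] <;> omega
    · rintro ⟨⟨c', s'⟩, hp', heq⟩
      simp only [shiftP, Prod.mk.injEq] at heq
      obtain ⟨rfl, rfl⟩ := heq
      obtain ⟨hb, ⟨⟨c₀, s₀⟩, hp₀, hrow, hcol⟩, hno⟩ := mem_circset_iff.mp hp'
      simp only at hb hrow hcol
      have hs' : s' ≠ r := by
        have := hfree (c₀, s₀) hp₀; simp only at this; omega
      refine ⟨mem_circset_iff.mpr ⟨by simp; omega,
        ⟨shiftP (c₀, s₀), Finset.mem_insert_of_mem (Finset.mem_image_of_mem _ hp₀),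
          by simp [shiftP]; omega, by simp [shiftP]; omega⟩, ?_⟩, by simp; omega⟩
      rintro ⟨p₂, hp₂, hcol2, hrow2⟩
      rcases Finset.mem_insert.mp hp₂ with h0 | h0
      · subst h0; simp only at hcol2; omega
      obtain ⟨⟨c₃, s₃⟩, hp₃, rfl⟩ := Finset.mem_image.mp h0
      simp only [shiftP] at hcol2 hrow2
      exact hno ⟨(c₃, s₃), hp₃, by simp; omega, by simp; omega⟩
  have claim2 : (circset (m + 1) (insert (0, r) (shiftC C))).filter (fun p => p.2 = r)
      = ((Finset.range (m - r)).filter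
          (fun c => ¬∃ p ∈ C, p.1 = c ∧ r < p.2)).image (fun c => (c + 1, r)) := by
    ext ⟨c, s⟩
    rw [Finset.mem_filter, Finset.mem_image]
    constructor
    · rintro ⟨hp, hs⟩
      simp only at hs
      subst hs
      obtain ⟨hb, ⟨p₀, hp₀, hrow, hcol⟩, hno⟩ := mem_circset_iff.mp hp
      simp only at hb hrow hcol
      have hc1 : 1 ≤ c := by
        rcases Finset.mem_insert.mp hp₀ with h0 | h0
        · subst h0; simp only at hcol; omega
        · exfalso
          obtain ⟨⟨c₁, s₁⟩, hp₁, rfl⟩ := Finset.mem_image.mp h0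
          simp only [shiftP] at hrow
          exact hfree (c₁, s₁) hp₁ hrow
      refine ⟨c - 1, Finset.mem_filter.mpr ⟨Finset.mem_range.mpr (by omega), ?_⟩,
        by simp [Prod.ext_iff]; omega⟩
      rintro ⟨⟨c₂, s₂⟩, hp₂, hcol2, hrow2⟩
      simp only at hcol2 hrow2
      apply hno
      refine ⟨shiftP (c₂, s₂), Finset.mem_insert_of_mem (Finset.mem_image_of_mem _ hp₂),
        ?_, ?_⟩ <;> simp [shiftP] <;> omega
    · rintro ⟨c₀, hc₀, heq⟩
      obtain ⟨hc₀r, hc₀f⟩ := Finset.mem_filter.mp hc₀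
      rw [Finset.mem_range] at hc₀r
      simp only [Prod.mk.injEq] at heq
      obtain ⟨rfl, rfl⟩ := heq
      refine ⟨mem_circset_iff.mpr ⟨by simp; omega,
        ⟨(0, r), Finset.mem_insert_self _ _, rfl, by simp⟩, ?_⟩, rfl⟩
      rintro ⟨p₂, hp₂, hcol2, hrow2⟩
      rcases Finset.mem_insert.mp hp₂ with h0 | h0
      · subst h0; simp only at hrow2; omega
      obtain ⟨⟨c₃, s₃⟩, hp₃, rfl⟩ := Finset.mem_image.mp h0
      simp only [shiftP] at hcol2 hrow2
      exact hc₀f ⟨(c₃, s₃), hp₃, by simp; omega, by simp; omega⟩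
  have hsplit := Finset.card_filter_add_card_filter_not
    (s := circset (m + 1) (insert (0, r) (shiftC C))) (p := fun p => p.2 = r)
  rw [circ_eq_card, ← hsplit, claim1, claim2,
    Finset.card_image_of_injective _ shiftP_injective,
    Finset.card_image_of_injective _ (fun a b h => by
      simpa using (Prod.mk.injEq _ _ _ _ ▸ h : (a + 1, r) = (b + 1, r)))]
  rw [← circ_eq_card]
  omega
lemma E_eq (m r : ℕ) (C : Finset (ℕ × ℕ))
    (hsub : ∀ p ∈ C, p.1 + p.2 < m)
    (hcols : ∀ p ∈ C, ∀ p' ∈ C, p.1 = p'.1 → p = p')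
    (hrows : ∀ p ∈ C, ∀ p' ∈ C, p.2 = p'.2 → p = p') :
    ((Finset.range (m - r)).filter (fun c => ¬∃ p ∈ C, p.1 = c ∧ r < p.2)).card
      = ((freeRows m C).filter (fun r' => r < r')).card := by
  set K : Finset (ℕ × ℕ) := C.filter (fun p => r < p.2) with hK
  -- the occupied columns among range (m-r)
  have h1 : (Finset.range (m - r)).filter (fun c => ∃ p ∈ C, p.1 = c ∧ r < p.2)
      = K.image Prod.fst := by
    ext c
    rw [Finset.mem_filter, Finset.mem_image, Finset.mem_range]
    constructor
    · rintro ⟨_, p, hp, rfl, hrp⟩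
      exact ⟨p, Finset.mem_filter.mpr ⟨hp, hrp⟩, rfl⟩
    · rintro ⟨p, hp, rfl⟩
      obtain ⟨hpC, hrp⟩ := Finset.mem_filter.mp hp
      exact ⟨by have := hsub p hpC; omega, p, hpC, rfl, hrp⟩
  have hKfst : (K.image Prod.fst).card = K.card := by
    apply Finset.card_image_of_injOn
    intro p hp p' hp' h
    exact hcols p (Finset.mem_of_mem_filter _ hp) p' (Finset.mem_of_mem_filter _ hp') h
  have h2 := Finset.card_filter_add_card_filter_not
    (s := Finset.range (m - r)) (p := fun c => ∃ p ∈ C, p.1 = c ∧ r < p.2)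
  rw [Finset.card_range, h1, hKfst] at h2
  -- rows above r
  have hS : (Finset.range (m + 1)).filter (fun r' => r < r') = Finset.Ico (r + 1) (m + 1) := by
    ext x
    rw [Finset.mem_filter, Finset.mem_range, Finset.mem_Ico]
    omega
  have h3 : ((Finset.range (m + 1)).filter (fun r' => r < r')).filter
      (fun r' => ∃ p ∈ C, p.2 = r') = K.image Prod.snd := by
    ext r'
    rw [Finset.mem_filter, Finset.mem_filter, Finset.mem_image, Finset.mem_range]
    constructor
    · rintro ⟨⟨_, hrr⟩, p, hp, rfl⟩
      exact ⟨p, Finset.mem_filter.mpr ⟨hp, hrr⟩, rfl⟩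
    · rintro ⟨p, hp, rfl⟩
      obtain ⟨hpC, hrp⟩ := Finset.mem_filter.mp hp
      exact ⟨⟨by have := hsub p hpC; omega, hrp⟩, p, hpC, rfl⟩
  have hKsnd : (K.image Prod.snd).card = K.card := by
    apply Finset.card_image_of_injOn
    intro p hp p' hp' h
    exact hrows p (Finset.mem_of_mem_filter _ hp) p' (Finset.mem_of_mem_filter _ hp') h
  have h4 := Finset.card_filter_add_card_filter_not
    (s := (Finset.range (m + 1)).filter (fun r' => r < r'))
    (p := fun r' => ∃ p ∈ C, p.2 = r')
  have h6 : ((Finset.range (m + 1)).filter (fun r' => r < r')).card = m - r := by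
    rw [hS, Nat.card_Ico]; omega
  rw [h3, hKsnd, h6] at h4
  have h5 : ((Finset.range (m + 1)).filter (fun r' => r < r')).filter
      (fun r' => ¬∃ p ∈ C, p.2 = r') = (freeRows m C).filter (fun r' => r < r') := by
    ext x
    simp only [Finset.mem_filter, Finset.mem_range, mem_freeRows]
    push_neg
    constructor
    · rintro ⟨⟨hx, hrx⟩, hfree⟩
      exact ⟨⟨hx, fun p hp => hfree p hp⟩, hrx⟩
    · rintro ⟨⟨hx, hfree⟩, hrx⟩
      exact ⟨⟨hx, hrx⟩, fun p hp => hfree p hp⟩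
  rw [h5] at h4
  omega
def unshiftP (p : ℕ × ℕ) : ℕ × ℕ := (p.1 - 1, p.2)

lemma shiftC_mem_configs {m n : ℕ} {C : Finset (ℕ × ℕ)} (hC : C ∈ configs m n) :
    shiftC C ∈ configs (m + 1) n := by
  obtain ⟨hsub, hcard, hcols, hrows⟩ := mem_configs_iff.mp hC
  refine mem_configs_iff.mpr ⟨?_, ?_, ?_, ?_⟩
  · rintro p hp
    obtain ⟨p', hp', rfl⟩ := Finset.mem_image.mp hp
    have := hsub p' hp'
    simp only [shiftP]
    omega
  · rw [shiftC, Finset.card_image_of_injective _ shiftP_injective, hcard]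
  · rintro p hp p' hp' h
    obtain ⟨a, ha, rfl⟩ := Finset.mem_image.mp hp
    obtain ⟨b, hb, rfl⟩ := Finset.mem_image.mp hp'
    simp only [shiftP] at h
    rw [hcols a ha b hb (by omega)]
  · rintro p hp p' hp' h
    obtain ⟨a, ha, rfl⟩ := Finset.mem_image.mp hp
    obtain ⟨b, hb, rfl⟩ := Finset.mem_image.mp hp'
    simp only [shiftP] at h
    rw [hrows a ha b hb h]

lemma unshift_shift (C : Finset (ℕ × ℕ)) : C.image (unshiftP ∘ shiftP) = C := by
  have : unshiftP ∘ shiftP = id := by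
    funext ⟨a, b⟩; simp [unshiftP, shiftP]
  rw [this, Finset.image_id]

lemma sum_A (m n : ℕ) (q : ℝ) :
    ∑ C ∈ (configs (m + 1) (n + 1)).filter (fun C => ¬∃ p ∈ C, p.1 = 0),
        q ^ circ (m + 1) C
      = ∑ C ∈ configs m (n + 1), q ^ circ m C := by
  symm
  apply Finset.sum_nbij' (i := shiftC) (j := fun C => C.image unshiftP)
  · intro C hC
    rw [Finset.mem_filter]
    refine ⟨shiftC_mem_configs hC, ?_⟩
    rintro ⟨p, hp, hp0⟩
    obtain ⟨p', _, rfl⟩ := Finset.mem_image.mp hp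
    simp [shiftP] at hp0
  · intro C hC
    obtain ⟨hCmem, hno0⟩ := Finset.mem_filter.mp hC
    obtain ⟨hsub, hcard, hcols, hrows⟩ := mem_configs_iff.mp hCmem
    have hge1 : ∀ p ∈ C, 1 ≤ p.1 := by
      intro p hp
      by_contra h
      exact hno0 ⟨p, hp, by omega⟩
    refine mem_configs_iff.mpr ⟨?_, ?_, ?_, ?_⟩
    · rintro p hp
      obtain ⟨p', hp', rfl⟩ := Finset.mem_image.mp hp
      have h1 := hsub p' hp'
      have h2 := hge1 p' hp'
      simp only [unshiftP]
      omega
    · rw [Finset.card_image_of_injOn, hcard]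
      intro p hp p' hp' h
      simp only [unshiftP, Prod.mk.injEq] at h
      have := hge1 p hp; have := hge1 p' hp'
      have : p.1 = p'.1 := by omega
      exact Prod.ext this h.2
    · rintro p hp p' hp' h
      obtain ⟨a, ha, rfl⟩ := Finset.mem_image.mp hp
      obtain ⟨b, hb, rfl⟩ := Finset.mem_image.mp hp'
      simp only [unshiftP] at h
      have := hge1 a ha; have := hge1 b hb
      rw [hcols a ha b hb (by omega)]
    · rintro p hp p' hp' h
      obtain ⟨a, ha, rfl⟩ := Finset.mem_image.mp hp
      obtain ⟨b, hb, rfl⟩ := Finset.mem_image.mp hp'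
      simp only [unshiftP] at h
      rw [hrows a ha b hb h]
  · intro C _
    rw [shiftC, Finset.image_image, unshift_shift]
  · intro C hC
    obtain ⟨_, hno0⟩ := Finset.mem_filter.mp hC
    rw [shiftC, Finset.image_image]
    have : ∀ p ∈ C, (shiftP ∘ unshiftP) p = p := by
      intro p hp
      have : 1 ≤ p.1 := by
        by_contra h
        exact hno0 ⟨p, hp, by omega⟩
      simp only [Function.comp, shiftP, unshiftP]
      exact Prod.ext (by omega) rfl
    rw [Finset.image_congr (fun p hp => this p hp)]
    simp
  · intro C _
    rw [circ_shiftC]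
lemma freeRows_card {m n : ℕ} {C : Finset (ℕ × ℕ)} (hC : C ∈ configs m n) :
    (freeRows m C).card = m + 1 - n := by
  obtain ⟨hsub, hcard, hcols, hrows⟩ := mem_configs_iff.mp hC
  have h1 : (Finset.range (m + 1)).filter (fun r => ∃ p ∈ C, p.2 = r)
      = C.image Prod.snd := by
    ext r
    rw [Finset.mem_filter, Finset.mem_image, Finset.mem_range]
    constructor
    · rintro ⟨_, p, hp, rfl⟩; exact ⟨p, hp, rfl⟩
    · rintro ⟨p, hp, rfl⟩; exact ⟨by have := hsub p hp; omega, p, hp, rfl⟩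
  have h2 : (C.image Prod.snd).card = n := by
    rw [Finset.card_image_of_injOn fun p hp p' hp' h => hrows p hp p' hp' h, hcard]
  have h3 := Finset.card_filter_add_card_filter_not
    (s := Finset.range (m + 1)) (p := fun r => ∃ p ∈ C, p.2 = r)
  rw [Finset.card_range, h1, h2] at h3
  have h4 : (Finset.range (m + 1)).filter (fun r => ¬∃ p ∈ C, p.2 = r) = freeRows m C := by
    ext r
    rw [Finset.mem_filter, mem_freeRows, Finset.mem_range]
    push_neg
    tauto
  rw [h4] at h3
  omega

lemma insert_mem_configs {m n : ℕ} {C : Finset (ℕ × ℕ)} {r : ℕ} (hC : C ∈ configs m n)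
    (hr : r ∈ freeRows m C) : insert (0, r) (shiftC C) ∈ configs (m + 1) (n + 1) := by
  obtain ⟨hsub, hcard, hcols, hrows⟩ := mem_configs_iff.mp hC
  obtain ⟨hrm, hfree⟩ := mem_freeRows.mp hr
  have hnotmem : ((0 : ℕ), r) ∉ shiftC C := by
    intro h
    obtain ⟨p, _, hp⟩ := Finset.mem_image.mp h
    simp [shiftP, Prod.ext_iff] at hp
  refine mem_configs_iff.mpr ⟨?_, ?_, ?_, ?_⟩
  · intro p hp
    rcases Finset.mem_insert.mp hp with rfl | h
    · simp; omega
    · obtain ⟨p', hp', rfl⟩ := Finset.mem_image.mp h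
      have := hsub p' hp'
      simp only [shiftP]
      omega
  · rw [Finset.card_insert_of_notMem hnotmem, shiftC,
      Finset.card_image_of_injective _ shiftP_injective, hcard]
  · intro p hp p' hp' h
    rcases Finset.mem_insert.mp hp with rfl | h1 <;> rcases Finset.mem_insert.mp hp' with rfl | h2
    · rfl
    · exfalso; obtain ⟨a, _, rfl⟩ := Finset.mem_image.mp h2; simp [shiftP] at h
    · exfalso; obtain ⟨a, _, rfl⟩ := Finset.mem_image.mp h1; simp [shiftP] at h
    · obtain ⟨a, ha, rfl⟩ := Finset.mem_image.mp h1
      obtain ⟨b, hb, rfl⟩ := Finset.mem_image.mp h2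
      simp only [shiftP] at h ⊢
      rw [hcols a ha b hb (by omega)]
  · intro p hp p' hp' h
    rcases Finset.mem_insert.mp hp with rfl | h1 <;> rcases Finset.mem_insert.mp hp' with rfl | h2
    · rfl
    · exfalso; obtain ⟨a, ha, rfl⟩ := Finset.mem_image.mp h2
      exact hfree a ha (by simpa [shiftP] using h.symm)
    · exfalso; obtain ⟨a, ha, rfl⟩ := Finset.mem_image.mp h1
      exact hfree a ha (by simpa [shiftP] using h)
    · obtain ⟨a, ha, rfl⟩ := Finset.mem_image.mp h1
      obtain ⟨b, hb, rfl⟩ := Finset.mem_image.mp h2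
      simp only [shiftP] at h
      rw [hrows a ha b hb h]

lemma sum_B (m n : ℕ) (q : ℝ) :
    ∑ C ∈ (configs (m + 1) (n + 1)).filter (fun C => ∃ p ∈ C, p.1 = 0),
        q ^ circ (m + 1) C
      = ∑ C ∈ configs m n, q ^ circ m C * ∑ i ∈ Finset.range (m + 1 - n), q ^ i := by
  have key : ∀ C ∈ configs m n,
      q ^ circ m C * ∑ i ∈ Finset.range (m + 1 - n), q ^ i
        = ∑ r ∈ freeRows m C, q ^ circ (m + 1) (insert (0, r) (shiftC C)) := by
    intro C hC
    obtain ⟨hsub, hcard, hcols, hrows⟩ := mem_configs_iff.mp hC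
    rw [← sum_pow_card_filter_lt q (m + 1 - n) (freeRows m C) (freeRows_card hC),
      Finset.mul_sum]
    apply Finset.sum_congr rfl
    intro r hr
    obtain ⟨hrm, hfree⟩ := mem_freeRows.mp hr
    rw [circ_insert m r C hfree, E_eq m r C hsub hcols hrows, pow_add]
  rw [Finset.sum_congr rfl key, Finset.sum_sigma']
  symm
  apply Finset.sum_bij (i := fun a _ => insert ((0 : ℕ), a.2) (shiftC a.1))
  · intro a ha
    obtain ⟨h1, h2⟩ := Finset.mem_sigma.mp ha
    rw [Finset.mem_filter]
    exact ⟨insert_mem_configs h1 h2, ⟨(0, a.2), Finset.mem_insert_self _ _, rfl⟩⟩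
  · rintro ⟨C₁, r₁⟩ h₁ ⟨C₂, r₂⟩ h₂ h
    simp only at h
    have hcol1 : ∀ p ∈ shiftC C₁, p.1 ≠ 0 := by
      intro p hp
      obtain ⟨a, _, rfl⟩ := Finset.mem_image.mp hp
      simp [shiftP]
    have hcol2 : ∀ p ∈ shiftC C₂, p.1 ≠ 0 := by
      intro p hp
      obtain ⟨a, _, rfl⟩ := Finset.mem_image.mp hp
      simp [shiftP]
    have hr : r₁ = r₂ := by
      have h0 : ((0 : ℕ), r₁) ∈ insert ((0 : ℕ), r₂) (shiftC C₂) := by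
        rw [← h]; exact Finset.mem_insert_self _ _
      rcases Finset.mem_insert.mp h0 with heq | hmem
      · simpa using heq
      · exact absurd rfl (hcol2 _ hmem)
    subst hr
    have hCC : shiftC C₁ = shiftC C₂ := by
      ext p
      constructor
      · intro hp
        have hp' : p ∈ insert ((0 : ℕ), r₁) (shiftC C₂) := h ▸ Finset.mem_insert_of_mem hp
        rcases Finset.mem_insert.mp hp' with rfl | h' 
        · exact absurd rfl (hcol1 _ hp)
        · exact h'
      · intro hp
        have hp' : p ∈ insert ((0 : ℕ), r₁) (shiftC C₁) := h ▸ Finset.mem_insert_of_mem hp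
        rcases Finset.mem_insert.mp hp' with rfl | h' 
        · exact absurd rfl (hcol2 _ hp)
        · exact h'
    rw [shiftC, shiftC] at hCC
    have hC : C₁ = C₂ := Finset.image_injective shiftP_injective hCC
    subst hC
    rfl
  · intro b hb
    obtain ⟨hbmem, hex⟩ := Finset.mem_filter.mp hb
    obtain ⟨⟨c0, r⟩, hp0, hp0c⟩ := hex
    have hc0 : c0 = 0 := hp0c
    subst hc0
    obtain ⟨hsub, hcard, hcols, hrows⟩ := mem_configs_iff.mp hbmem
    set C' := (b.erase (0, r)).image unshiftP with hC'
    have hge1 : ∀ p ∈ b.erase (0, r), 1 ≤ p.1 := by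
      intro p hp
      obtain ⟨hne, hpb⟩ := Finset.mem_erase.mp hp
      by_contra hcon
      exact hne (hcols p hpb (0, r) hp0 (by omega))
    have hshift : shiftC C' = b.erase (0, r) := by
      rw [hC', shiftC, Finset.image_image]
      have heqon : ∀ p ∈ b.erase (0, r), (shiftP ∘ unshiftP) p = p := by
        intro p hp
        have := hge1 p hp
        exact Prod.ext (by simp [shiftP, unshiftP]; omega) rfl
      rw [Finset.image_congr (fun p hp => heqon p hp)]
      simp
    have hCmem : C' ∈ configs m n := by
      refine mem_configs_iff.mpr ⟨?_, ?_, ?_, ?_⟩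
      · intro p hp
        obtain ⟨p', hp', rfl⟩ := Finset.mem_image.mp hp
        have h1 := hsub p' (Finset.mem_of_mem_erase hp')
        have h2 := hge1 p' hp'
        simp only [unshiftP]
        omega
      · have hinj : Set.InjOn unshiftP (b.erase (0, r)) := by
          intro p hp p' hp' h
          simp only [Finset.mem_coe] at hp hp'
          have := hge1 p hp
          have := hge1 p' hp'
          simp only [unshiftP, Prod.mk.injEq] at h
          exact Prod.ext (by omega) h.2
        rw [hC', Finset.card_image_of_injOn hinj, Finset.card_erase_of_mem hp0, hcard]
        omega
      · intro p hp p' hp' h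
        obtain ⟨a, ha, rfl⟩ := Finset.mem_image.mp hp
        obtain ⟨a', ha', rfl⟩ := Finset.mem_image.mp hp'
        have := hge1 a ha
        have := hge1 a' ha'
        simp only [unshiftP] at h
        rw [hcols a (Finset.mem_of_mem_erase ha) a' (Finset.mem_of_mem_erase ha') (by omega)]
      · intro p hp p' hp' h
        obtain ⟨a, ha, rfl⟩ := Finset.mem_image.mp hp
        obtain ⟨a', ha', rfl⟩ := Finset.mem_image.mp hp'
        simp only [unshiftP] at h
        rw [hrows a (Finset.mem_of_mem_erase ha) a' (Finset.mem_of_mem_erase ha') h]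
    have hrmem : r ∈ freeRows m C' := by
      refine mem_freeRows.mpr ⟨by simpa using hsub (0, r) hp0, ?_⟩
      intro p hp hpr
      obtain ⟨p', hp', rfl⟩ := Finset.mem_image.mp hp
      have hpeq : p' = (0, r) := hrows p' (Finset.mem_of_mem_erase hp') (0, r) hp0
        (by simpa [unshiftP] using hpr)
      exact (Finset.mem_erase.mp hp').1 hpeq
    refine ⟨⟨C', r⟩, Finset.mem_sigma.mpr ⟨hCmem, hrmem⟩, ?_⟩
    simp only
    rw [hshift, Finset.insert_erase hp0]
  · intro a ha
    rfl
lemma configs_zero (m : ℕ) : configs m 0 = {∅} := by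
  ext C
  rw [mem_configs_iff, Finset.mem_singleton]
  constructor
  · rintro ⟨_, hcard, _, _⟩
    exact Finset.card_eq_zero.mp hcard
  · rintro rfl
    simp

lemma circ_empty (m : ℕ) : circ m ∅ = 0 := by
  rw [circ_eq_card]
  simp [circset]

lemma configs_eq_empty {m n : ℕ} (h : m < n) : configs m n = ∅ := by
  rw [Finset.eq_empty_iff_forall_notMem]
  intro C hC
  obtain ⟨hsub, hcard, hcols, _⟩ := mem_configs_iff.mp hC
  have himg : (C.image Prod.fst).card = n := by
    rw [Finset.card_image_of_injOn fun p hp p' hp' h => hcols p hp p' hp' h, hcard]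
  have hsubs : C.image Prod.fst ⊆ Finset.range m := by
    intro c hc
    obtain ⟨p, hp, rfl⟩ := Finset.mem_image.mp hc
    exact Finset.mem_range.mpr (by have := hsub p hp; omega)
  have := Finset.card_le_card hsubs
  rw [himg, Finset.card_range] at this
  omega

lemma recursion (m n : ℕ) (q : ℝ) :
    ∑ C ∈ configs (m + 1) (n + 1), q ^ circ (m + 1) C
      = (∑ C ∈ configs m (n + 1), q ^ circ m C)
        + (∑ i ∈ Finset.range (m + 1 - n), q ^ i) * ∑ C ∈ configs m n, q ^ circ m C := by
  rw [← Finset.sum_filter_add_sum_filter_not (configs (m + 1) (n + 1))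
    (fun C => ∃ p ∈ C, p.1 = 0), sum_A, sum_B, ← Finset.sum_mul]
  ring


/-- `Σ_{C ∈ C_n(S_{m+1})} q^{circ(C)} = G_q[m+1, m-n+1]`. -/
theorem sum_q_circ_eq_gould (m n : ℕ) (hm : n ≤ m) (q : ℝ) (hq0 : 0 < q) (hq1 : q ≠ 1) :
    ∑ C ∈ configs m n, q ^ circ m C = gould q (m + 1) (m - n + 1) := by
  induction m generalizing n with
  | zero =>
    have hn : n = 0 := by omega
    subst hn
    rw [configs_zero, Finset.sum_singleton, circ_empty, pow_zero]
    exact (gould_diag q 1).symm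
  | succ m ih =>
    cases n with
    | zero =>
      rw [configs_zero, Finset.sum_singleton, circ_empty, pow_zero]
      exact (gould_diag q (m + 2)).symm
    | succ n =>
      have hnm : n ≤ m := by omega
      have harith : m + 1 - (n + 1) + 1 = m - n + 1 := by omega
      rw [harith]
      have h1 : ∑ C ∈ configs m (n + 1), q ^ circ m C = gould q (m + 1) (m - n) := by
        rcases Nat.lt_or_ge n m with h | h
        · rw [ih (n + 1) (by omega)]
          congr 1
          omega
        · have hnm' : n = m := by omega
          subst hnm'
          rw [configs_eq_empty (by omega), Finset.sum_empty, Nat.sub_self]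
          rfl
      have h2 : (∑ i ∈ Finset.range (m + 1 - n), q ^ i) = qAnalogue q (m - n + 1) := by
        have he : m + 1 - n = m - n + 1 := by omega
        rw [he, qAnalogue_eq_sum q hq1]
      rw [recursion m n q, h1, h2, ih n hnm]
      conv_rhs => rw [gould]
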